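/- arXiv:1304.4270 — 4 statements merged into one kernel-verified Lean document; each statement's English description precedes it below -/
import Mathlib

section
/- If a Lindblad generator L(H, {L_k}) in standard form (L_k|Ψ⟩ = 0 for all k and H|Ψ⟩ = h|Ψ⟩) leaves ρ_d = |Ψ⟩⟨Ψ| invariant, then for each k, D_k ρ_d D_k† = 0; consequently, writing each noise operator as D_k = D_{N_k} ⊗ I on a tensor factorization H = H_{N_k} ⊗ H_{N̄_k}, the reduced state ρ_{N_k} = Tr_{N̄_k}(ρ_d) satisfies supp(ρ_{N_k}) ⊆ ker(D_{N_k}). -/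
/-! The partial trace over `H_B` commutes with operators acting on `H_A` alone, so
`D_N ρ_N = Tr_B((D_N ⊗ I) ρ_d) = Tr_B(L ρ_d)`, which vanishes because `L` annihilates `|Ψ⟩`. -/

open Matrix Kronecker
open scoped ComplexOrder

/-- Partial trace over the second tensor factor. -/
noncomputable def ptraceB {A B : Type*} [Fintype B] (ρ : Matrix (A × B) (A × B) ℂ) :
    Matrix A A ℂ :=
  fun a a' => ∑ b : B, ρ (a, b) (a', b)

theorem ptraceB_kronecker_one_mul {A B : Type*} [Fintype A] [Fintype B] [DecidableEq B]
    (D : Matrix A A ℂ) (ρ : Matrix (A × B) (A × B) ℂ) :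
    ptraceB ((D ⊗ₖ (1 : Matrix B B ℂ)) * ρ) = D * ptraceB ρ := by
  ext a a'
  simp only [ptraceB, mul_apply, kroneckerMap_apply, Fintype.sum_prod_type, one_apply,
    mul_ite, mul_one, mul_zero, ite_mul, zero_mul, Finset.sum_ite_eq, Finset.mem_univ,
    if_true, Finset.mul_sum]
  exact Finset.sum_comm

theorem stmt_3_general {A B ι : Type*} [Fintype A] [Fintype B] [DecidableEq B]
    (L : ι → Matrix (A × B) (A × B) ℂ)
    (ψ : A × B → ℂ)
    (hstd : ∀ k, (L k).mulVec ψ = 0)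
    (k0 : ι) (DN : Matrix A A ℂ) (hk0 : L k0 = DN ⊗ₖ (1 : Matrix B B ℂ)) :
    L k0 * vecMulVec ψ (star ψ) * (L k0)ᴴ = 0 ∧
      LinearMap.range (ptraceB (vecMulVec ψ (star ψ))).mulVecLin ≤
        LinearMap.ker DN.mulVecLin := by
  have hL : L k0 * vecMulVec ψ (star ψ) = 0 := by
    rw [mul_vecMulVec, hstd k0, zero_vecMulVec]
  have hDN : DN * ptraceB (vecMulVec ψ (star ψ)) = 0 := by
    rw [← ptraceB_kronecker_one_mul, ← hk0, hL]
    exact funext₂ fun _ _ => Finset.sum_const_zero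
  refine ⟨by rw [hL, Matrix.zero_mul], ?_⟩
  rw [LinearMap.range_le_ker_iff, ← mulVecLin_mul, hDN, mulVecLin_zero]

/-- if a Lindblad generator in standard form (`L_k|Ψ⟩ = 0` for all `k`
and `H|Ψ⟩ = h|Ψ⟩`, `H` Hermitian) leaves `ρ_d = |Ψ⟩⟨Ψ|` invariant, then for a
quasi-local noise operator `L_{k0} = D_N ⊗ I` we have `L_{k0} ρ_d L_{k0}† = 0` and
`supp(ρ_N) ⊆ ker(D_N)` where `ρ_N = Tr_B(ρ_d)`. -/
theorem stmt_3 {A B ι : Type*} [Fintype A] [Fintype B] [DecidableEq A] [DecidableEq B]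
    [Fintype ι]
    (H : Matrix (A × B) (A × B) ℂ) (hH : H.IsHermitian)
    (L : ι → Matrix (A × B) (A × B) ℂ)
    (ψ : A × B → ℂ) (hψ : dotProduct (star ψ) ψ = 1)
    (hstd : ∀ k, (L k).mulVec ψ = 0)
    (h : ℝ) (hHe : H.mulVec ψ = (h : ℂ) • ψ)
    (k0 : ι) (DN : Matrix A A ℂ) (hk0 : L k0 = DN ⊗ₖ (1 : Matrix B B ℂ)) :
    L k0 * vecMulVec ψ (star ψ) * (L k0)ᴴ = 0 ∧
      LinearMap.range (ptraceB (vecMulVec ψ (star ψ))).mulVecLin ≤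
        LinearMap.ker DN.mulVecLin :=
  stmt_3_general L ψ hstd k0 DN hk0
end

section
/- Let n ≥ 2 qubits carry the GHZ state with H_0 = span{|0⟩^⊗n, |1⟩^⊗n}. Suppose H is a Hermitian operator on (ℂ²)^⊗n that is a sum H = Σ_k H_k where each H_k acts nontrivially on a set of at most n_k < n/2 qubits (tensored with identity elsewhere). Then ⟨1…1| H |0…0⟩ = 0 and H|0…0⟩ is orthogonal to H|1…1⟩; in particular there is no such H with H|0…0⟩ = −H|1…1⟩ ≠ 0 up to components in H_0, so the GHZ state cannot satisfy the quasi-local destabilization condition H|Ψ_GHZ⟩ = 0 with H|Φ_1⟩ ∉ H_0, where |Φ_1⟩ = (|0⟩^⊗n − |1⟩^⊗n)/√2. -/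
open Matrix

/-- `A = A_S ⊗ I`: the operator `A` on `n` qubits acts nontrivially only on the
qubits in `S`, as identity elsewhere. -/
def IsLocalOn {n : ℕ} (S : Finset (Fin n))
    (A : Matrix (Fin n → Fin 2) (Fin n → Fin 2) ℂ) : Prop :=
  ∃ B : Matrix ({i : Fin n // i ∈ S} → Fin 2) ({i : Fin n // i ∈ S} → Fin 2) ℂ,
    ∀ x y, A x y =
      if ∀ i ∉ S, x i = y i then B (fun i => x i.1) (fun i => y i.1) else 0

private lemma mulVec_ind {n : ℕ} (M : Matrix (Fin n → Fin 2) (Fin n → Fin 2) ℂ)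
    (c : Fin n → Fin 2) :
    M.mulVec (fun y => if y = c then (1:ℂ) else 0) = fun x => M x c := by
  funext x
  simp [Matrix.mulVec, dotProduct, mul_ite]

/-- if `n` is even and `H = Σ_k H_k` is Hermitian with each `H_k`
acting on fewer than `n/2` qubits, then `⟨1…1|H|0…0⟩ = 0`, `H|0…0⟩ ⊥ H|1…1⟩`, and
in particular `H` cannot satisfy `H|Ψ_GHZ⟩ = 0` together with
`H|Φ_1⟩ ∉ H_0 = span{|0…0⟩, |1…1⟩}`. -/
theorem stmt_7 {n : ℕ} (hn : 2 ≤ n) (hev : Even n) {ι : Type*} [Fintype ι]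
    (Hk : ι → Matrix (Fin n → Fin 2) (Fin n → Fin 2) ℂ)
    (N : ι → Finset (Fin n))
    (hloc : ∀ k, IsLocalOn (N k) (Hk k))
    (hsize : ∀ k, 2 * (N k).card < n)
    (H : Matrix (Fin n → Fin 2) (Fin n → Fin 2) ℂ)
    (hH : H = ∑ k, Hk k) (hherm : H.IsHermitian) :
    H (fun _ => 1) (fun _ => 0) = 0 ∧
    (∑ x : Fin n → Fin 2,
        star (H.mulVec (fun y => if y = fun _ => 0 then (1 : ℂ) else 0) x) *
          H.mulVec (fun y => if y = fun _ => 1 then (1 : ℂ) else 0) x) = 0 ∧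
    ¬ (H.mulVec (fun x : Fin n → Fin 2 =>
          (((if x = fun _ => 0 then 1 else 0) + (if x = fun _ => 1 then 1 else 0)) /
            (Real.sqrt 2 : ℂ))) = 0 ∧
        H.mulVec (fun x : Fin n → Fin 2 =>
            (((if x = fun _ => 0 then 1 else 0) - (if x = fun _ => 1 then 1 else 0)) /
              (Real.sqrt 2 : ℂ))) ∉
          Submodule.span ℂ
            ({fun x : Fin n → Fin 2 => if x = fun _ => 0 then (1 : ℂ) else 0,
              fun x : Fin n → Fin 2 => if x = fun _ => 1 then (1 : ℂ) else 0} :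
              Set ((Fin n → Fin 2) → ℂ))) := by
  set c0 : Fin n → Fin 2 := fun _ => 0 with hc0
  set c1 : Fin n → Fin 2 := fun _ => 1 with hc1
  have hfree : ∀ k x y, (¬ ∀ i ∉ N k, x i = y i) → Hk k x y = 0 := by
    intro k x y h
    obtain ⟨B, hB⟩ := hloc k
    rw [hB, if_neg h]
  have hsum0 : ∀ x y, (∀ k, Hk k x y = 0) → H x y = 0 := by
    intro x y h
    rw [hH]
    simp only [Finset.sum_apply, Matrix.sum_apply]
    exact Finset.sum_eq_zero fun k _ => h k
  have hkey : ∀ x, H x c0 = 0 ∨ H x c1 = 0 := by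
    intro x
    by_contra hcon
    push_neg at hcon
    obtain ⟨h0, h1⟩ := hcon
    obtain ⟨k0, hk0⟩ : ∃ k, Hk k x c0 ≠ 0 := by
      by_contra h; push_neg at h
      exact h0 (hsum0 x c0 h)
    obtain ⟨k1, hk1⟩ : ∃ k, Hk k x c1 ≠ 0 := by
      by_contra h; push_neg at h
      exact h1 (hsum0 x c1 h)
    have hx0 : ∀ i ∉ N k0, x i = 0 := by
      by_contra h
      exact hk0 (hfree k0 x c0 h)
    have hx1 : ∀ i ∉ N k1, x i = 1 := by
      by_contra h
      exact hk1 (hfree k1 x c1 h)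
    have hs0 : Finset.univ.filter (fun i => x i ≠ 0) ⊆ N k0 := by
      intro i hi
      simp only [Finset.mem_filter, Finset.mem_univ, true_and] at hi
      by_contra hmem
      exact hi (hx0 i hmem)
    have hs1 : Finset.univ.filter (fun i => x i ≠ 1) ⊆ N k1 := by
      intro i hi
      simp only [Finset.mem_filter, Finset.mem_univ, true_and] at hi
      by_contra hmem
      exact hi (hx1 i hmem)
    have hcover : (Finset.univ : Finset (Fin n)) ⊆
        Finset.univ.filter (fun i => x i ≠ 0) ∪ Finset.univ.filter (fun i => x i ≠ 1) := by
      intro i _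
      simp only [Finset.mem_union, Finset.mem_filter, Finset.mem_univ, true_and]
      by_contra h
      push_neg at h
      rw [h.1] at h
      exact absurd h.2 (by decide)
    have hle := Finset.card_le_card hcover
    have hle2 := Finset.card_union_le (Finset.univ.filter (fun i => x i ≠ 0))
      (Finset.univ.filter (fun i => x i ≠ 1))
    have hc0le := Finset.card_le_card hs0
    have hc1le := Finset.card_le_card hs1
    have hsz0 := hsize k0
    have hsz1 := hsize k1
    rw [Finset.card_univ, Fintype.card_fin] at hle
    omega
  have hpart1 : H c1 c0 = 0 := by
    apply hsum0
    intro k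
    apply hfree
    intro hall
    have hlt : (N k).card < n := by have := hsize k; omega
    obtain ⟨i, hi⟩ : ∃ i, i ∉ N k := by
      by_contra h; push_neg at h
      have heq : N k = Finset.univ := Finset.eq_univ_iff_forall.2 h
      rw [heq, Finset.card_univ, Fintype.card_fin] at hlt
      omega
    simpa [hc0, hc1] using hall i hi
  refine ⟨hpart1, ?_, ?_⟩
  · rw [mulVec_ind, mulVec_ind]
    apply Finset.sum_eq_zero
    intro x _
    rcases hkey x with h | h <;> simp [h]
  · rintro ⟨h1, h2⟩
    have s2 : ((Real.sqrt 2 : ℝ) : ℂ) ≠ 0 := by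
      have : (0:ℝ) < Real.sqrt 2 := Real.sqrt_pos.mpr (by norm_num)
      exact_mod_cast this.ne'
    have hplus : (fun x : Fin n → Fin 2 =>
        (((if x = c0 then 1 else 0) + (if x = c1 then 1 else 0)) / (Real.sqrt 2 : ℂ)))
        = ((Real.sqrt 2 : ℂ))⁻¹ • ((fun x => if x = c0 then (1:ℂ) else 0)
            + (fun x => if x = c1 then (1:ℂ) else 0)) := by
      funext x
      simp [div_eq_inv_mul]
    rw [hplus, Matrix.mulVec_smul, Matrix.mulVec_add, mulVec_ind, mulVec_ind] at h1
    have hcols : ∀ x, H x c0 = 0 ∧ H x c1 = 0 := by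
      intro x
      have hx := congrFun h1 x
      simp only [Pi.smul_apply, Pi.add_apply, Pi.zero_apply, smul_eq_mul,
        mul_eq_zero, inv_eq_zero, s2, false_or] at hx
      rcases hkey x with h | h
      · exact ⟨h, by rw [h, zero_add] at hx; exact hx⟩
      · exact ⟨by rw [h, add_zero] at hx; exact hx, h⟩
    apply h2
    have hminus : (fun x : Fin n → Fin 2 =>
        (((if x = c0 then 1 else 0) - (if x = c1 then 1 else 0)) / (Real.sqrt 2 : ℂ)))
        = ((Real.sqrt 2 : ℂ))⁻¹ • ((fun x => if x = c0 then (1:ℂ) else 0)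
            - (fun x => if x = c1 then (1:ℂ) else 0)) := by
      funext x
      simp [div_eq_inv_mul]
    rw [hminus, Matrix.mulVec_smul, Matrix.mulVec_sub, mulVec_ind, mulVec_ind]
    have hz0 : (fun x => H x c0) = 0 := funext fun x => (hcols x).1
    have hz1 : (fun x => H x c1) = 0 := funext fun x => (hcols x).2
    rw [hz0, hz1, sub_zero, smul_zero]
    exact Submodule.zero_mem _
end

section
/- For n ≥ 3 qubits with the W state and any neighborhood structure where each neighborhood N_k is a proper subset of {1,…,n}, the intersection ∩_k supp(ρ_{N_k} ⊗ I_{N̄_k}) contains span{|Ψ_W⟩, |0⟩^⊗n}, which is 2-dimensional; hence the W state fails the DQLS support condition supp(ρ_d) = ∩_k supp(ρ_{N_k} ⊗ I_{N̄_k}). -/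
open Matrix

/-- Recombine a configuration on the qubits in `N` with one on the complement. -/
def glue {n : ℕ} (N : Finset (Fin n)) (a : {i : Fin n // i ∈ N} → Fin 2)
    (c : {i : Fin n // i ∉ N} → Fin 2) : Fin n → Fin 2 :=
  fun i => if h : i ∈ N then a ⟨i, h⟩ else c ⟨i, h⟩

/-- Partial trace over the qubits not in `N`. -/
noncomputable def ptraceCompl {n : ℕ} (N : Finset (Fin n))
    (ρ : Matrix (Fin n → Fin 2) (Fin n → Fin 2) ℂ) :
    Matrix ({i : Fin n // i ∈ N} → Fin 2) ({i : Fin n // i ∈ N} → Fin 2) ℂ :=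
  fun a b => ∑ c : {i : Fin n // i ∉ N} → Fin 2, ρ (glue N a c) (glue N b c)

/-- The operator `R ⊗ I` on the full space, where `R` acts on the qubits in `N`. -/
def embedLocal {n : ℕ} (N : Finset (Fin n))
    (R : Matrix ({i : Fin n // i ∈ N} → Fin 2) ({i : Fin n // i ∈ N} → Fin 2) ℂ) :
    Matrix (Fin n → Fin 2) (Fin n → Fin 2) ℂ :=
  fun x y => if ∀ i ∉ N, x i = y i then R (fun i => x i.1) (fun i => y i.1) else 0

/-- Hamming weight of a computational-basis label. -/
def hammingWt {n : ℕ} (x : Fin n → Fin 2) : ℕ :=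
  (Finset.univ.filter fun i => x i = 1).card

/-- The `n`-qubit W state. -/
noncomputable def wState (n : ℕ) : (Fin n → Fin 2) → ℂ :=
  fun x => if hammingWt x = 1 then (1 / (Real.sqrt n : ℂ)) else 0

lemma fin2_cases (a : Fin 2) : a = 0 ∨ a = 1 := by revert a; decide

def sw {α : Type*} [Fintype α] (f : α → Fin 2) : ℕ := ∑ i, (f i : ℕ)

lemma hammingWt_eq_sw {n : ℕ} (x : Fin n → Fin 2) : hammingWt x = sw x := by
  unfold hammingWt sw
  rw [Finset.card_filter]
  refine Finset.sum_congr rfl fun i _ => ?_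
  rcases fin2_cases (x i) with h | h <;> simp [h]

lemma sw_eq_zero_iff {α : Type*} [Fintype α] (f : α → Fin 2) :
    sw f = 0 ↔ ∀ i, f i = 0 := by
  unfold sw
  rw [Finset.sum_eq_zero_iff]
  constructor
  · intro h i
    rcases fin2_cases (f i) with h0 | h1
    · exact h0
    · exact absurd (h i (Finset.mem_univ i)) (by simp [h1])
  · intro h i _
    simp [h i]

lemma sw_eq_zero_iff' {α : Type*} [Fintype α] (f : α → Fin 2) :
    sw f = 0 ↔ f = fun _ => 0 := by
  rw [sw_eq_zero_iff, funext_iff]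

lemma sw_zero_fn {α : Type} [Fintype α] : sw (fun _ : α => (0 : Fin 2)) = 0 := by
  simp [sw]

def ind {α : Type*} [DecidableEq α] (i : α) : α → Fin 2 := fun j => if j = i then 1 else 0

lemma sw_ind {α : Type*} [Fintype α] [DecidableEq α] (i : α) : sw (ind i) = 1 := by
  simp [sw, ind, apply_ite (fun a : Fin 2 => (a : ℕ))]

lemma sw_eq_one {α : Type*} [Fintype α] [DecidableEq α] {f : α → Fin 2} (h : sw f = 1) :
    ∃ i, f = ind i := by
  have h1 : ∃ i, f i = 1 := by
    by_contra hc
    push_neg at hc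
    have h0 : ∀ i, f i = 0 := fun i => (fin2_cases (f i)).resolve_right (hc i)
    rw [(sw_eq_zero_iff f).mpr h0] at h
    omega
  obtain ⟨i, hi⟩ := h1
  refine ⟨i, funext fun j => ?_⟩
  unfold ind
  by_cases hj : j = i
  · simp [hj, hi]
  · simp only [if_neg hj]
    have hsum : ∑ k ∈ Finset.univ.erase i, (f k : ℕ) + (f i : ℕ) = 1 := by
      rw [Finset.sum_erase_add]
      · exact h
      · exact Finset.mem_univ i
    rw [hi] at hsum
    have : ∑ k ∈ Finset.univ.erase i, (f k : ℕ) = 0 := by omega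
    have hj0 := (Finset.sum_eq_zero_iff.mp this) j (Finset.mem_erase.mpr ⟨hj, Finset.mem_univ j⟩)
    rcases fin2_cases (f j) with h0 | h1
    · exact h0
    · simp [h1] at hj0

lemma ind_inj {α : Type*} [DecidableEq α] {i j : α} (h : ind i = ind j) : i = j := by
  have := congrFun h i
  simp only [ind, if_pos rfl] at this
  by_contra hij
  rw [if_neg hij] at this
  exact absurd this (by decide)

lemma sum_sw_one {α : Type*} [Fintype α] [DecidableEq α] (f : (α → Fin 2) → ℂ) :
    ∑ c : α → Fin 2, (if sw c = 1 then f c else 0) = ∑ i : α, f (ind i) := by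
  rw [← Finset.sum_filter]
  refine (Finset.sum_bij (fun (i : α) _ => ind i) ?_ ?_ ?_ ?_).symm
  · intro i _
    simp [Finset.mem_filter, sw_ind]
  · intro i _ j _ h
    exact ind_inj h
  · intro c hc
    obtain ⟨i, hi⟩ := sw_eq_one (Finset.mem_filter.mp hc).2
    exact ⟨i, Finset.mem_univ i, hi.symm⟩
  · intro i _
    rfl

section GlueLemmas

variable {n : ℕ}

def res (N : Finset (Fin n)) (x : Fin n → Fin 2) : {i : Fin n // i ∈ N} → Fin 2 :=
  fun i => x i.1

def resC (N : Finset (Fin n)) (x : Fin n → Fin 2) : {i : Fin n // i ∉ N} → Fin 2 :=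
  fun i => x i.1

lemma glue_res_resC (N : Finset (Fin n)) (x : Fin n → Fin 2) :
    glue N (res N x) (resC N x) = x := by
  funext i
  unfold glue res resC
  split <;> rfl

lemma res_glue (N : Finset (Fin n)) (a : {i : Fin n // i ∈ N} → Fin 2)
    (c : {i : Fin n // i ∉ N} → Fin 2) : res N (glue N a c) = a := by
  funext i
  simp [res, glue, i.2]

lemma resC_glue (N : Finset (Fin n)) (a : {i : Fin n // i ∈ N} → Fin 2)
    (c : {i : Fin n // i ∉ N} → Fin 2) : resC N (glue N a c) = c := by
  funext i
  simp [resC, glue, i.2]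

lemma sw_glue (N : Finset (Fin n)) (a : {i : Fin n // i ∈ N} → Fin 2)
    (c : {i : Fin n // i ∉ N} → Fin 2) : sw (glue N a c) = sw a + sw c := by
  unfold sw
  rw [← Finset.sum_add_sum_compl N]
  congr 1
  · rw [← Finset.sum_coe_sort N]
    refine Finset.sum_congr rfl fun i _ => ?_
    have : glue N a c i.1 = a i := by simp [glue, i.2]
    rw [this]
  · rw [Finset.sum_subtype (Nᶜ) (fun i => Finset.mem_compl) (fun i => ((glue N a c i : Fin 2) : ℕ))]
    refine Finset.sum_congr rfl fun i _ => ?_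
    have : glue N a c i.1 = c i := by simp [glue, i.2]
    rw [this]

lemma sw_res_add (N : Finset (Fin n)) (x : Fin n → Fin 2) :
    sw x = sw (res N x) + sw (resC N x) := by
  conv_lhs => rw [← glue_res_resC N x]
  exact sw_glue N _ _

end GlueLemmas

section Embed

variable {n : ℕ}

lemma embed_mulVec (N : Finset (Fin n))
    (R : Matrix ({i : Fin n // i ∈ N} → Fin 2) ({i : Fin n // i ∈ N} → Fin 2) ℂ)
    (v : (Fin n → Fin 2) → ℂ) (x : Fin n → Fin 2) :
    (embedLocal N R).mulVec v x
      = ∑ b : {i : Fin n // i ∈ N} → Fin 2, R (res N x) b * v (glue N b (resC N x)) := by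
  show ∑ y, (if ∀ i ∉ N, x i = y i then R (res N x) (res N y) else 0) * v y = _
  calc ∑ y, (if ∀ i ∉ N, x i = y i then R (res N x) (res N y) else 0) * v y
      = ∑ y, (if ∀ i ∉ N, x i = y i then R (res N x) (res N y) * v y else 0) := by
        refine Finset.sum_congr rfl fun y _ => ?_
        split <;> simp
    _ = ∑ y ∈ Finset.univ.filter (fun y => ∀ i ∉ N, x i = y i),
          R (res N x) (res N y) * v y := by rw [Finset.sum_filter]
    _ = ∑ b : {i : Fin n // i ∈ N} → Fin 2, R (res N x) b * v (glue N b (resC N x)) := by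
        refine Finset.sum_nbij' (fun y => res N y) (fun b => glue N b (resC N x)) ?_ ?_ ?_ ?_ ?_
        · intro y _; exact Finset.mem_univ _
        · intro b _
          simp only [Finset.mem_filter, Finset.mem_univ, true_and]
          intro i hi
          simp [glue, hi, resC]
        · intro y hy
          simp only [Finset.mem_filter, Finset.mem_univ, true_and] at hy
          funext i
          by_cases h : i ∈ N
          · simp [glue, res, h]
          · simp only [glue, res, resC, dif_neg h]
            exact hy i h
        · intro b _
          exact res_glue N b (resC N x)
        · intro y hy
          simp only [Finset.mem_filter, Finset.mem_univ, true_and] at hy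
          have hgy : glue N (res N y) (resC N x) = y := by
            funext i
            by_cases h : i ∈ N
            · simp [glue, res, h]
            · simp only [glue, res, resC, dif_neg h]
              exact hy i h
          show _ = R (res N x) (res N y) * v (glue N (res N y) (resC N x))
          rw [hgy]

end Embed

section SC

noncomputable def sc (n : ℕ) : ℂ := 1 / (Real.sqrt n : ℂ)

lemma star_sc (n : ℕ) : star (sc n) = sc n := by
  simp [sc, Complex.star_def, Complex.conj_ofReal]

lemma sc_ne_zero {n : ℕ} (hn : 1 ≤ n) : sc n ≠ 0 := by
  have h : (0:ℝ) < Real.sqrt n := Real.sqrt_pos.mpr (by exact_mod_cast hn)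
  exact one_div_ne_zero (Complex.ofReal_ne_zero.mpr (ne_of_gt h))

lemma sc_mul_sc {n : ℕ} (hn : 1 ≤ n) : sc n * sc n = 1 / (n : ℂ) := by
  have h : Real.sqrt n * Real.sqrt n = (n : ℝ) := Real.mul_self_sqrt (Nat.cast_nonneg n)
  unfold sc
  rw [div_mul_div_comm, one_mul, ← Complex.ofReal_mul, h, Complex.ofReal_natCast]

lemma wState_apply {n : ℕ} (x : Fin n → Fin 2) :
    wState n x = if sw x = 1 then sc n else 0 := by
  unfold wState sc
  rw [hammingWt_eq_sw]

end SC

section MComp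

variable {n : ℕ}

lemma ptrace_rho_apply (N : Finset (Fin n)) (a b : {i : Fin n // i ∈ N} → Fin 2) :
    ptraceCompl N (vecMulVec (wState n) (star (wState n))) a b
      = ∑ c : {i : Fin n // i ∉ N} → Fin 2,
          (if sw a + sw c = 1 then sc n else 0) * (if sw b + sw c = 1 then sc n else 0) := by
  unfold ptraceCompl
  refine Finset.sum_congr rfl fun c _ => ?_
  rw [vecMulVec_apply, Pi.star_apply, wState_apply, wState_apply,
    apply_ite (star : ℂ → ℂ), star_sc, star_zero, sw_glue, sw_glue]

lemma M_mulVec (N : Finset (Fin n)) (v : (Fin n → Fin 2) → ℂ) (x : Fin n → Fin 2) :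
    (embedLocal N (ptraceCompl N (vecMulVec (wState n) (star (wState n))))).mulVec v x
      = ∑ b : {i : Fin n // i ∈ N} → Fin 2,
          (∑ c : {i : Fin n // i ∉ N} → Fin 2,
            (if sw (res N x) + sw c = 1 then sc n else 0) * (if sw b + sw c = 1 then sc n else 0))
          * v (glue N b (resC N x)) := by
  rw [embed_mulVec]
  exact Finset.sum_congr rfl fun b _ => by rw [ptrace_rho_apply]

end MComp

section Eigen

variable {n : ℕ}

lemma add_one_eq_one_iff (m : ℕ) : m + 1 = 1 ↔ m = 0 := by omega
lemma one_add_eq_one_iff (m : ℕ) : 1 + m = 1 ↔ m = 0 := by omega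

lemma eig_d0 (hn : 1 ≤ n) (N : Finset (Fin n)) :
    (embedLocal N (ptraceCompl N (vecMulVec (wState n) (star (wState n))))).mulVec
      (fun x => if x = fun _ => 0 then (1:ℂ) else 0)
    = ((Fintype.card {i : Fin n // i ∉ N} : ℂ) / n) •
      (fun x => if x = fun _ => 0 then (1:ℂ) else 0) := by
  funext x
  rw [Pi.smul_apply, M_mulVec]
  by_cases hx : resC N x = fun _ => 0
  · have hg : ∀ b, (glue N b (resC N x) = fun _ => 0) ↔ b = fun _ => 0 := by
      intro b
      constructor
      · intro h
        rw [← res_glue N b (resC N x), h]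
        rfl
      · intro h
        rw [h, hx]
        funext i
        unfold glue
        split <;> rfl
    have hx0 : (x = fun _ => 0) ↔ sw (res N x) = 0 := by
      constructor
      · intro h
        rw [h]
        exact sw_zero_fn
      · intro h
        rw [← glue_res_resC N x, (sw_eq_zero_iff' _).mp h, hx]
        funext i
        unfold glue
        split <;> rfl
    simp only [hg, mul_ite, mul_one, mul_zero]
    rw [Finset.sum_ite_eq' Finset.univ (fun _ => (0 : Fin 2))]
    simp only [Finset.mem_univ, if_true, sw_zero_fn, zero_add, mul_ite, mul_zero,
      sum_sw_one, sw_ind, add_one_eq_one_iff, ite_mul, zero_mul,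
      Finset.sum_const, Finset.card_univ, nsmul_eq_mul, hx0]
    by_cases h0 : sw (res N x) = 0 <;>
      simp [h0, sc_mul_sc hn] <;> ring
  · have hterm : ∀ b, (if glue N b (resC N x) = fun _ => 0 then (1:ℂ) else 0) = 0 := by
      intro b
      rw [if_neg]
      intro h
      apply hx
      rw [← resC_glue N b (resC N x), h]
      rfl
    simp only [hterm, mul_zero, Finset.sum_const_zero]
    have hxne : ¬(x = fun _ => 0) := fun h => hx (by rw [h]; rfl)
    rw [if_neg hxne, smul_zero]

lemma eig_uIn (hn : 1 ≤ n) (N : Finset (Fin n)) :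
    (embedLocal N (ptraceCompl N (vecMulVec (wState n) (star (wState n))))).mulVec
      (fun x => if sw x = 1 ∧ ∀ i ∉ N, x i = 0 then (1:ℂ) else 0)
    = ((Fintype.card {i : Fin n // i ∈ N} : ℂ) / n) •
      (fun x => if sw x = 1 ∧ ∀ i ∉ N, x i = 0 then (1:ℂ) else 0) := by
  funext x
  rw [Pi.smul_apply, M_mulVec]
  by_cases hx : resC N x = fun _ => 0
  · have hgi : ∀ b, ((sw (glue N b (resC N x)) = 1 ∧ ∀ i ∉ N, glue N b (resC N x) i = 0))
        ↔ sw b = 1 := by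
      intro b
      simp only [sw_glue, hx, sw_zero_fn, add_zero]
      constructor
      · exact fun h => h.1
      · intro h
        exact ⟨h, fun i hi => by simp [glue, hi]⟩
    have hc : ∀ c : {i : Fin n // i ∉ N} → Fin 2, ((1 : ℕ) + sw c = 1) ↔ c = fun _ => 0 := by
      intro c
      rw [one_add_eq_one_iff, sw_eq_zero_iff']
    have hxc : (sw x = 1 ∧ ∀ i ∉ N, x i = 0) ↔ sw (res N x) = 1 := by
      rw [sw_res_add N x, hx, sw_zero_fn, add_zero]
      constructor
      · exact fun h => h.1
      · intro h
        refine ⟨h, fun i hi => ?_⟩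
        have : resC N x ⟨i, hi⟩ = 0 := by rw [hx]
        exact this
    simp only [hgi, mul_ite, mul_one, mul_zero, sum_sw_one, sw_ind, hc,
      Finset.sum_ite_eq', Finset.mem_univ, if_true,
      sw_zero_fn, add_zero, ite_mul, zero_mul, Finset.sum_const, Finset.card_univ,
      nsmul_eq_mul, hxc]
    by_cases h1 : sw (res N x) = 1 <;> simp [h1, sc_mul_sc hn, sw_zero_fn] <;> ring
  · have hterm : ∀ b,
        (if sw (glue N b (resC N x)) = 1 ∧ ∀ i ∉ N, glue N b (resC N x) i = 0 then (1:ℂ) else 0)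
          = 0 := by
      intro b
      rw [if_neg]
      rintro ⟨-, h2⟩
      apply hx
      funext i
      have := h2 i.1 i.2
      simpa [glue, i.2] using this
    simp only [hterm, mul_zero, Finset.sum_const_zero]
    have hxne : ¬(sw x = 1 ∧ ∀ i ∉ N, x i = 0) := by
      rintro ⟨-, h2⟩
      apply hx
      funext i
      exact h2 i.1 i.2
    rw [if_neg hxne, smul_zero]

lemma eig_uOut (hn : 1 ≤ n) (N : Finset (Fin n)) :
    (embedLocal N (ptraceCompl N (vecMulVec (wState n) (star (wState n))))).mulVec
      (fun x => if sw x = 1 ∧ ∀ i ∈ N, x i = 0 then (1:ℂ) else 0)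
    = ((Fintype.card {i : Fin n // i ∉ N} : ℂ) / n) •
      (fun x => if sw x = 1 ∧ ∀ i ∈ N, x i = 0 then (1:ℂ) else 0) := by
  funext x
  rw [Pi.smul_apply, M_mulVec]
  have hgb : ∀ b, ((sw (glue N b (resC N x)) = 1 ∧ ∀ i ∈ N, glue N b (resC N x) i = 0))
      ↔ (b = (fun _ => 0) ∧ sw (resC N x) = 1) := by
    intro b
    rw [sw_glue]
    constructor
    · rintro ⟨h1, h2⟩
      have hb : b = fun _ => 0 := by
        funext i
        have := h2 i.1 i.2
        simpa [glue, i.2] using this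
      refine ⟨hb, ?_⟩
      rw [hb] at h1
      simpa [sw_zero_fn] using h1
    · rintro ⟨hb, hc⟩
      subst hb
      exact ⟨by simpa [sw_zero_fn] using hc, fun i hi => by simp [glue, hi]⟩
  have hxo : (sw x = 1 ∧ ∀ i ∈ N, x i = 0) ↔ (sw (res N x) = 0 ∧ sw (resC N x) = 1) := by
    rw [sw_res_add N x]
    constructor
    · rintro ⟨h1, h2⟩
      have h0 : sw (res N x) = 0 := (sw_eq_zero_iff _).mpr (fun i => h2 i.1 i.2)
      exact ⟨h0, by omega⟩
    · rintro ⟨h0, h1⟩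
      refine ⟨by omega, fun i hi => ?_⟩
      exact (sw_eq_zero_iff _).mp h0 ⟨i, hi⟩
  simp only [hgb, ite_and, mul_ite, mul_one, mul_zero,
    Finset.sum_ite_eq', Finset.mem_univ, if_true,
    sw_zero_fn, zero_add, sum_sw_one, sw_ind, add_one_eq_one_iff, ite_mul, zero_mul,
    Finset.sum_const, Finset.card_univ, nsmul_eq_mul, hxo]
  by_cases h0 : sw (res N x) = 0 <;> by_cases h1 : sw (resC N x) = 1 <;>
    simp [h0, h1, sc_mul_sc hn, sw_zero_fn, sum_sw_one, sw_ind, add_one_eq_one_iff,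
      Finset.sum_const, Finset.card_univ, mul_comm] <;> ring

end Eigen

section Main

variable {n : ℕ}

lemma w_decomp (N : Finset (Fin n)) :
    wState n = sc n • ((fun x => if sw x = 1 ∧ ∀ i ∉ N, x i = 0 then (1:ℂ) else 0)
      + (fun x => if sw x = 1 ∧ ∀ i ∈ N, x i = 0 then (1:ℂ) else 0)) := by
  funext x
  rw [wState_apply]
  simp only [Pi.smul_apply, Pi.add_apply, smul_eq_mul]
  by_cases h : sw x = 1
  · rw [if_pos h]
    obtain ⟨i, rfl⟩ := sw_eq_one h
    by_cases hi : i ∈ N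
    · rw [if_pos ⟨h, fun j hj => by simp [ind, show ¬ j = i from fun he => hj (he ▸ hi)]⟩, if_neg]
      · ring
      · rintro ⟨-, h2⟩
        have := h2 i hi
        simp [ind] at this
    · rw [if_neg, if_pos ⟨h, fun j hj => by simp [ind, show ¬ j = i from fun he => hi (he ▸ hj)]⟩]
      · ring
      · rintro ⟨-, h2⟩
        have := h2 i hi
        simp [ind] at this
  · rw [if_neg h, if_neg (fun hc => h hc.1), if_neg (fun hc => h hc.1)]
    ring

lemma mem_range_of_eig {M : Matrix (Fin n → Fin 2) (Fin n → Fin 2) ℂ}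
    {v : (Fin n → Fin 2) → ℂ} {μ : ℂ} (h : M.mulVec v = μ • v) (hμ : μ ≠ 0) :
    v ∈ LinearMap.range M.mulVecLin :=
  ⟨μ⁻¹ • v, by
    rw [_root_.map_smul, Matrix.mulVecLin_apply, h, smul_smul, inv_mul_cancel₀ hμ, one_smul]⟩

end Main

set_option maxHeartbeats 1000000

/-- for `n ≥ 3` qubits and any neighborhood structure of proper subsets
covering `{1,…,n}`, the intersection `∩_k supp(ρ_{N_k} ⊗ I)` contains the 2-dimensional
subspace `span{|Ψ_W⟩, |0⟩^⊗n}`; hence the W state fails the DQLS support condition. -/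
theorem stmt_10 {n : ℕ} (hn : 3 ≤ n) {ι : Type*} [Fintype ι]
    (𝒩 : ι → Finset (Fin n)) (hprop : ∀ k, 𝒩 k ≠ Finset.univ)
    (hcover : ∀ i : Fin n, ∃ k, i ∈ 𝒩 k) :
    Submodule.span ℂ
        ({wState n, fun x : Fin n → Fin 2 => if x = fun _ => 0 then (1 : ℂ) else 0} :
          Set ((Fin n → Fin 2) → ℂ)) ≤
      (⨅ k, LinearMap.range
        (embedLocal (𝒩 k)
          (ptraceCompl (𝒩 k) (vecMulVec (wState n) (star (wState n))))).mulVecLin) ∧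
    Module.finrank ℂ
        (Submodule.span ℂ
          ({wState n, fun x : Fin n → Fin 2 => if x = fun _ => 0 then (1 : ℂ) else 0} :
            Set ((Fin n → Fin 2) → ℂ))) = 2 ∧
    LinearMap.range (vecMulVec (wState n) (star (wState n))).mulVecLin ≠
      (⨅ k, LinearMap.range
        (embedLocal (𝒩 k)
          (ptraceCompl (𝒩 k) (vecMulVec (wState n) (star (wState n))))).mulVecLin) := by

  have hn1 : 1 ≤ n := by omega
  have hn0 : (n : ℂ) ≠ 0 := Nat.cast_ne_zero.mpr (by omega)
  have hrange : ∀ k,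
      wState n ∈ LinearMap.range (embedLocal (𝒩 k)
        (ptraceCompl (𝒩 k) (vecMulVec (wState n) (star (wState n))))).mulVecLin ∧
      (fun x : Fin n → Fin 2 => if x = fun _ => 0 then (1 : ℂ) else 0) ∈
        LinearMap.range (embedLocal (𝒩 k)
          (ptraceCompl (𝒩 k) (vecMulVec (wState n) (star (wState n))))).mulVecLin := by
    intro k
    have hcompl0 : (Fintype.card {i : Fin n // i ∉ 𝒩 k} : ℂ) / n ≠ 0 := by
      refine div_ne_zero (Nat.cast_ne_zero.mpr ?_) hn0
      have hex : ∃ i, i ∉ 𝒩 k := by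
        by_contra hc
        push_neg at hc
        exact hprop k (Finset.eq_univ_iff_forall.mpr hc)
      obtain ⟨i, hi⟩ := hex
      have hpos : 0 < Fintype.card {i : Fin n // i ∉ 𝒩 k} := Fintype.card_pos_iff.mpr ⟨⟨i, hi⟩⟩
      omega
    have hIn : (fun x : Fin n → Fin 2 => if sw x = 1 ∧ ∀ i ∉ 𝒩 k, x i = 0 then (1:ℂ) else 0) ∈
        LinearMap.range (embedLocal (𝒩 k)
          (ptraceCompl (𝒩 k) (vecMulVec (wState n) (star (wState n))))).mulVecLin := by
      by_cases hN : Fintype.card {i : Fin n // i ∈ 𝒩 k} = 0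
      · have hz : (fun x : Fin n → Fin 2 =>
            if sw x = 1 ∧ ∀ i ∉ 𝒩 k, x i = 0 then (1:ℂ) else 0) = 0 := by
          funext x
          rw [if_neg]
          · rfl
          rintro ⟨h1, h2⟩
          obtain ⟨i, rfl⟩ := sw_eq_one h1
          have hi : i ∈ 𝒩 k := by
            by_contra hi
            have := h2 i hi
            simp [ind] at this
          exact (Fintype.card_eq_zero_iff.mp hN).false ⟨i, hi⟩
        rw [hz]
        exact Submodule.zero_mem _
      · exact mem_range_of_eig (eig_uIn hn1 (𝒩 k))
          (div_ne_zero (Nat.cast_ne_zero.mpr hN) hn0)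
    have hOut := mem_range_of_eig (eig_uOut hn1 (𝒩 k)) hcompl0
    refine ⟨?_, mem_range_of_eig (eig_d0 hn1 (𝒩 k)) hcompl0⟩
    have hmem := Submodule.smul_mem _ (sc n) (Submodule.add_mem _ hIn hOut)
    rwa [← w_decomp (𝒩 k)] at hmem
  have part1 : Submodule.span ℂ
      ({wState n, fun x : Fin n → Fin 2 => if x = fun _ => 0 then (1 : ℂ) else 0} :
        Set ((Fin n → Fin 2) → ℂ)) ≤
      (⨅ k, LinearMap.range
        (embedLocal (𝒩 k)
          (ptraceCompl (𝒩 k) (vecMulVec (wState n) (star (wState n))))).mulVecLin) := by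
    rw [Submodule.span_le]
    rintro v hv
    rw [SetLike.mem_coe, Submodule.mem_iInf]
    intro k
    rcases hv with rfl | hv
    · exact (hrange k).1
    · rw [Set.mem_singleton_iff] at hv
      subst hv
      exact (hrange k).2
  have i0 : Fin n := ⟨0, by omega⟩
  have hwi : wState n (ind i0) = sc n := by rw [wState_apply, if_pos (sw_ind i0)]
  have hw0 : wState n (fun _ => 0) = 0 := by
    rw [wState_apply, if_neg]
    rw [sw_zero_fn]
    omega
  have hsc : sc n ≠ 0 := sc_ne_zero hn1
  have hne0 : ¬(ind i0 = fun _ : Fin n => 0) := by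
    intro h
    have := congrFun h i0
    simp [ind] at this
  have hli : LinearIndependent ℂ
      ![wState n, (fun x : Fin n → Fin 2 => if x = fun _ => 0 then (1:ℂ) else 0)] := by
    rw [LinearIndependent.pair_iff]
    intro s t hst
    have h1 := congrFun hst (ind i0)
    have h2 := congrFun hst (fun _ => 0)
    simp only [Pi.add_apply, Pi.smul_apply, smul_eq_mul, Pi.zero_apply] at h1 h2
    rw [hwi, if_neg hne0, mul_zero, add_zero] at h1
    rw [hw0] at h2
    norm_num at h2
    exact ⟨(mul_eq_zero.mp h1).resolve_right hsc, h2⟩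
  have hspan_eq : ({wState n, fun x : Fin n → Fin 2 => if x = fun _ => 0 then (1 : ℂ) else 0} :
      Set ((Fin n → Fin 2) → ℂ)) =
      Set.range ![wState n, (fun x : Fin n → Fin 2 => if x = fun _ => 0 then (1:ℂ) else 0)] := by
    simp only [Matrix.range_cons, Matrix.range_empty, Set.union_empty, Set.singleton_union]
  have part2 : Module.finrank ℂ
      (Submodule.span ℂ
        ({wState n, fun x : Fin n → Fin 2 => if x = fun _ => 0 then (1 : ℂ) else 0} :
          Set ((Fin n → Fin 2) → ℂ))) = 2 := by
    rw [hspan_eq, finrank_span_eq_card hli]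
    simp
  refine ⟨part1, part2, ?_⟩
  intro heq
  have hw_ne : wState n ≠ 0 := by
    intro h
    rw [h] at hwi
    exact hsc (by simpa using hwi.symm)
  have hsub : LinearMap.range (vecMulVec (wState n) (star (wState n))).mulVecLin ≤
      Submodule.span ℂ {wState n} := by
    rintro v ⟨u, rfl⟩
    have hval : (vecMulVec (wState n) (star (wState n))).mulVecLin u
        = (∑ y, star (wState n y) * u y) • wState n := by
      funext x
      simp only [Matrix.mulVecLin_apply, Matrix.mulVec, dotProduct, vecMulVec_apply,
        Pi.star_apply, Pi.smul_apply, smul_eq_mul]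
      rw [Finset.sum_mul]
      exact Finset.sum_congr rfl fun y _ => by ring
    rw [hval]
    exact Submodule.smul_mem _ _ (Submodule.mem_span_singleton_self _)
  rw [heq] at hsub
  have hle := le_trans part1 hsub
  have hfin := Submodule.finrank_mono hle
  rw [part2, finrank_span_singleton hw_ne] at hfin
  omega
end

section
/- Let L_D be a Lindblad generator such that the set of states supported on H_0 is globally asymptotically stable, and let H_0 = span{|Ψ⟩} ⊕ H_w. If H' is a subspace with H' ⊥ H_w and D(H') invariant under the semigroup, then every trajectory starting in D(H') converges to ρ_d = |Ψ⟩⟨Ψ|. -/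
open Matrix Filter
open scoped ComplexOrder

/-!
The limit `σ` of the trajectory given by global asymptotic stability is a trace-one state
supported on `H₀`. Since `D(H')` is invariant and the subspace `H'` is closed, `σ` is also
supported on `H'`; as `H' ⊥ H_w`, the `H_w`-component of every vector in the range of `σ`
vanishes, so `σ` is supported on `span {ψ}`. A trace-one Hermitian matrix with range in
`span {ψ}`, `‖ψ‖ = 1`, is `|ψ⟩⟨ψ|`.
-/

namespace Matrix

variable {m n R : Type*} [Fintype n]

theorem exists_eq_vecMulVec_of_range_le_span [CommSemiring R]
    {σ : Matrix m n R} {ψ : m → R}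
    (h : LinearMap.range σ.mulVecLin ≤ Submodule.span R {ψ}) :
    ∃ c : n → R, σ = vecMulVec ψ c := by
  classical
  have hcol : ∀ j, ∃ c : R, c • ψ = σ *ᵥ Pi.single j 1 := fun j =>
    Submodule.mem_span_singleton.mp (h ⟨Pi.single j 1, rfl⟩)
  choose c hc using hcol
  refine ⟨c, ext fun i j => ?_⟩
  simpa [vecMulVec_apply, mul_comm] using (congr_fun (hc j) i).symm

theorem IsHermitian.eq_vecMulVec_star_of_range_le_span [CommRing R] [StarRing R]
    {σ : Matrix n n R} (hσ : σ.IsHermitian) (htr : σ.trace = 1)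
    {ψ : n → R} (hψ : star ψ ⬝ᵥ ψ = 1)
    (h : LinearMap.range σ.mulVecLin ≤ Submodule.span R {ψ}) :
    σ = vecMulVec ψ (star ψ) := by
  obtain ⟨c, rfl⟩ := exists_eq_vecMulVec_of_range_le_span h
  -- multiply `ψ cᵀ = (star c) ψᴴ` on the left by the row `star ψ`
  have hc : c = (star ψ ⬝ᵥ star c) • star ψ := by
    have := congr_arg (star ψ ᵥ* ·) hσ.symm
    simpa [conjTranspose_vecMulVec, vecMul_vecMulVec, hψ] using this
  rw [hc, vecMulVec_smul] at htr ⊢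
  rw [trace_smul, trace_vecMulVec, dotProduct_comm ψ, hψ, smul_eq_mul, mul_one] at htr
  rw [htr, one_smul]

theorem range_mulVecLin_le_of_tendsto [Fintype m] {𝕜 : Type*}
    [NontriviallyNormedField 𝕜] [CompleteSpace 𝕜] {α : Type*} {l : Filter α} [l.NeBot]
    {f : α → Matrix m n 𝕜} {σ : Matrix m n 𝕜} (hf : Tendsto f l (nhds σ))
    {W : Submodule 𝕜 (m → 𝕜)} (hW : ∀ᶠ a in l, LinearMap.range (f a).mulVecLin ≤ W) :
    LinearMap.range σ.mulVecLin ≤ W := by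
  rintro _ ⟨v, rfl⟩
  refine W.closed_of_finiteDimensional.mem_of_tendsto
    (((continuous_id.matrix_mulVec continuous_const).tendsto σ).comp hf) ?_
  filter_upwards [hW] with a ha
  exact ha ⟨v, rfl⟩

end Matrix

theorem mem_span_singleton_of_mem_sup_of_forall_dotProduct_eq_zero {n R : Type*} [Fintype n]
    [CommRing R] [StarRing R] [PartialOrder R] [StarOrderedRing R] [NoZeroDivisors R]
    {ψ x : n → R} {W : Submodule R (n → R)} (hψ : ∀ w ∈ W, star ψ ⬝ᵥ w = 0)
    (hx : x ∈ Submodule.span R {ψ} ⊔ W) (hxW : ∀ w ∈ W, star x ⬝ᵥ w = 0) :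
    x ∈ Submodule.span R {ψ} := by
  obtain ⟨_, hy, w, hw, rfl⟩ := Submodule.mem_sup.mp hx
  obtain ⟨a, rfl⟩ := Submodule.mem_span_singleton.mp hy
  have hww : star w ⬝ᵥ w = 0 := by
    simpa [star_smul, add_dotProduct, smul_dotProduct, hψ w hw] using hxW w hw
  rw [dotProduct_star_self_eq_zero.mp hww, add_zero]
  exact Submodule.smul_mem _ a (Submodule.mem_span_singleton_self ψ)

theorem stmt_15_general {d : ℕ}
    (T : ℝ → (Matrix (Fin d) (Fin d) ℂ →ₗ[ℂ] Matrix (Fin d) (Fin d) ℂ))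
    (htr : ∀ (t : ℝ) (ρ : Matrix (Fin d) (Fin d) ℂ), 0 ≤ t → (T t ρ).trace = ρ.trace)
    (ψ : Fin d → ℂ) (hψ : dotProduct (star ψ) ψ = 1)
    (H0 Hw H' : Submodule ℂ (Fin d → ℂ))
    (hdecomp : H0 = (Submodule.span ℂ {ψ}) ⊔ Hw)
    (horthw : ∀ w ∈ Hw, dotProduct (star ψ) w = 0)
    (hGAS : ∀ ρ : Matrix (Fin d) (Fin d) ℂ, ρ.PosSemidef → ρ.trace = 1 →
      ∃ σ : Matrix (Fin d) (Fin d) ℂ, σ.PosSemidef ∧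
        LinearMap.range σ.mulVecLin ≤ H0 ∧
        Tendsto (fun t : ℝ => T t ρ) atTop (nhds σ))
    (hperp : ∀ u ∈ H', ∀ w ∈ Hw, dotProduct (star u) w = 0)
    (hinv : ∀ (t : ℝ) (ρ : Matrix (Fin d) (Fin d) ℂ), 0 ≤ t → ρ.PosSemidef →
      LinearMap.range ρ.mulVecLin ≤ H' → LinearMap.range (T t ρ).mulVecLin ≤ H') :
    ∀ ρ : Matrix (Fin d) (Fin d) ℂ, ρ.PosSemidef → ρ.trace = 1 →
      LinearMap.range ρ.mulVecLin ≤ H' →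
      Tendsto (fun t : ℝ => T t ρ) atTop (nhds (vecMulVec ψ (star ψ))) := by
  intro ρ hρ hρtr hρH'
  obtain ⟨σ, hσ, hσH0, hlim⟩ := hGAS ρ hρ hρtr
  have hσtr : σ.trace = 1 :=
    tendsto_nhds_unique ((continuous_id.matrix_trace.tendsto σ).comp hlim) <|
      tendsto_const_nhds.congr' <| by
        filter_upwards [eventually_ge_atTop 0] with t ht
        exact ((htr t ρ ht).trans hρtr).symm
  have hσH' : LinearMap.range σ.mulVecLin ≤ H' :=
    range_mulVecLin_le_of_tendsto hlim <| by
      filter_upwards [eventually_ge_atTop 0] with t ht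
      exact hinv t ρ ht hρ hρH'
  have hσψ : LinearMap.range σ.mulVecLin ≤ Submodule.span ℂ {ψ} := fun x hx =>
    mem_span_singleton_of_mem_sup_of_forall_dotProduct_eq_zero horthw
      (hdecomp ▸ hσH0 hx) (hperp x (hσH' hx))
  rwa [hσ.isHermitian.eq_vecMulVec_star_of_range_le_span hσtr hψ hσψ] at hlim

/-- if the set of states supported on `H_0 = span{|Ψ⟩} ⊕ H_w` is GAS for
the semigroup, `H'` is a subspace orthogonal to `H_w` containing `|Ψ⟩` whose density
operators form an invariant set, then every trajectory starting in `D(H')` converges to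
`ρ_d = |Ψ⟩⟨Ψ|`. -/
theorem stmt_15 {d : ℕ}
    (T : ℝ → (Matrix (Fin d) (Fin d) ℂ →ₗ[ℂ] Matrix (Fin d) (Fin d) ℂ))
    (hT0 : T 0 = LinearMap.id)
    (hTsemi : ∀ s t : ℝ, 0 ≤ s → 0 ≤ t → T (s + t) = (T s).comp (T t))
    (htr : ∀ (t : ℝ) (ρ : Matrix (Fin d) (Fin d) ℂ), 0 ≤ t → (T t ρ).trace = ρ.trace)
    (hpos : ∀ (t : ℝ) (ρ : Matrix (Fin d) (Fin d) ℂ), 0 ≤ t → ρ.PosSemidef →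
      (T t ρ).PosSemidef)
    (ψ : Fin d → ℂ) (hψ : dotProduct (star ψ) ψ = 1)
    (H0 Hw H' : Submodule ℂ (Fin d → ℂ))
    (hdecomp : H0 = (Submodule.span ℂ {ψ}) ⊔ Hw)
    (hdisj : (Submodule.span ℂ ({ψ} : Set (Fin d → ℂ))) ⊓ Hw = ⊥)
    (horthw : ∀ w ∈ Hw, dotProduct (star ψ) w = 0)
    (hGAS : ∀ ρ : Matrix (Fin d) (Fin d) ℂ, ρ.PosSemidef → ρ.trace = 1 →
      ∃ σ : Matrix (Fin d) (Fin d) ℂ, σ.PosSemidef ∧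
        LinearMap.range σ.mulVecLin ≤ H0 ∧
        Tendsto (fun t : ℝ => T t ρ) atTop (nhds σ))
    (hψH' : ψ ∈ H')
    (hperp : ∀ u ∈ H', ∀ w ∈ Hw, dotProduct (star u) w = 0)
    (hinv : ∀ (t : ℝ) (ρ : Matrix (Fin d) (Fin d) ℂ), 0 ≤ t → ρ.PosSemidef →
      LinearMap.range ρ.mulVecLin ≤ H' → LinearMap.range (T t ρ).mulVecLin ≤ H') :
    ∀ ρ : Matrix (Fin d) (Fin d) ℂ, ρ.PosSemidef → ρ.trace = 1 →
      LinearMap.range ρ.mulVecLin ≤ H' →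
      Tendsto (fun t : ℝ => T t ρ) atTop (nhds (vecMulVec ψ (star ψ))) :=
  stmt_15_general T htr ψ hψ H0 Hw H' hdecomp horthw hGAS hperp hinv
end
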